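/- Let W = x_1^{a_1}x_2 + x_2^{a_2}x_3 + ⋯ + x_k^{a_k}x_1 be an invertible loop polynomial of weight 1 (each monomial has weighted degree 1) with weights q_1,…,q_k. If α = ∏_{i even} x_i^{a_i−1} dx_1⋯dx_k (the product over even indices i of x_i^{a_i−1}, times the top form), then wt(α) = k/2. In particular k must be even for such a G_W-invariant broad element to have μ^+ = μ^-. -/

import Mathlib

open Finset

namespace Fin

variable {k : ℕ} [NeZero k]

theorem even_val_add_one_iff (hk : Even k) (i : Fin k) :
    Even ((i + 1 : Fin k) : ℕ) ↔ ¬Even (i : ℕ) := by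
  rw [val_add, val_one', Nat.add_mod_mod, ← Nat.even_add_one,
    Nat.even_iff, Nat.even_iff, Nat.mod_mod_of_dvd _ (even_iff_two_dvd.mp hk)]

theorem sum_even_val_add_one {M : Type*} [AddCommMonoid M] (hk : Even k) (f : Fin k → M) :
    ∑ i ∈ univ.filter (fun i : Fin k => Even (i : ℕ)), f (i + 1) =
      ∑ i ∈ univ.filter (fun i : Fin k => ¬Even (i : ℕ)), f i :=
  sum_equiv (Equiv.addRight 1) (by simp only [mem_filter, mem_univ, true_and, Equiv.coe_addRight,
    even_val_add_one_iff hk, not_not, implies_true]) (fun _ _ => rfl)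

theorem card_filter_even_val (hk : Even k) :
    ((univ.filter (fun i : Fin k => Even (i : ℕ))).card : ℚ) = k / 2 := by
  have hodd := sum_even_val_add_one hk (fun _ => (1 : ℚ))
  have htotal := sum_filter_add_sum_filter_not univ (fun i : Fin k => Even (i : ℕ))
    (fun _ => (1 : ℚ))
  simp only [sum_const, nsmul_eq_mul, mul_one] at htotal
  rw [cast_card]
  linarith

end Fin

theorem loop_broad_weight_general (k : ℕ) [NeZero k] (hke : Even k)
    (a : Fin k → ℕ) (q : Fin k → ℚ)
    (hq : ∀ i : Fin k, (a i : ℚ) * q i + q (i + 1) = 1) :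
    (∑ i ∈ Finset.univ.filter (fun i : Fin k => Even (i : ℕ)), ((a i : ℚ) - 1) * q i) +
        ∑ i, q i = (k : ℚ) / 2 := by
  set E := univ.filter (fun i : Fin k => Even (i : ℕ))
  calc (∑ i ∈ E, ((a i : ℚ) - 1) * q i) + ∑ i, q i
      = ∑ i ∈ E, ((a i : ℚ) - 1) * q i + (∑ i ∈ E, q i + ∑ i ∈ E, q (i + 1)) := by
        rw [Fin.sum_even_val_add_one hke, sum_filter_add_sum_filter_not]
    _ = ∑ i ∈ E, ((a i : ℚ) * q i + q (i + 1)) := by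
        rw [← sum_add_distrib, ← sum_add_distrib]
        exact sum_congr rfl fun i _ => by ring
    _ = k / 2 := by simp [hq, E, Fin.card_filter_even_val hke]

/-- Loop-type case of the lemma `μ⁺ = μ⁻` for invertible polynomials with the maximal
group: let `W = x₁^{a₁}x₂ + ⋯ + x_k^{a_k}x₁` be a loop polynomial of weight 1, i.e. the
weights `qᵢ` satisfy `aᵢqᵢ + q_{i+1} = 1` (indices cyclic).  If `k` is even, then the
broad element `α = ∏_{i even} xᵢ^{aᵢ-1} · dx₁⋯dx_k` has weight
`wt(α) = ∑_{i even}(aᵢ - 1)qᵢ + ∑ᵢ qᵢ = k/2`. -/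
theorem loop_broad_weight (k : ℕ) [NeZero k] (hke : Even k)
    (a : Fin k → ℕ) (q : Fin k → ℚ)
    (ha : ∀ i, 2 ≤ a i)
    (hq : ∀ i : Fin k, (a i : ℚ) * q i + q (i + 1) = 1) :
    (∑ i ∈ Finset.univ.filter (fun i : Fin k => Even (i : ℕ)), ((a i : ℚ) - 1) * q i) +
        ∑ i, q i = (k : ℚ) / 2 :=
  loop_broad_weight_general k hke a q hq
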